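/- If V is an R-submodule of M with dim V > k, then ∑_{U} η_V(U) 1_U = 0 as a function M → ℚ, where the sum runs over all R-submodules U of M and 1_U is the indicator function of U; equivalently, for every x ∈ M, ∑_{U : x ∈ U ⊆ V} (−1)^{dim V − dim U} q^{binom(dim V − dim U, 2)} = 0, the sum running over all R-submodules U of V containing x. -/

import Mathlib

/-!
An `R`-submodule of `M_{k×m}(F)` is the module of all matrices whose rows lie in a subspace
`W ≤ F^m`, its dimension is `dim W`, and it contains `x` iff `W` contains the row space `X` of `x`.
The sum therefore becomes `∑_{X ≤ W ≤ V'} (-1)^(n - dim W) q^binom(n - dim W, 2)` with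
`n = dim V' > k ≥ dim X`, which is the Möbius function of the subspace lattice and vanishes on the
nontrivial interval `[X, V']`: pick a functional `φ` with `X ≤ ker φ` and `V' ≰ ker φ`. For each
`u ∈ V'` with `φ u = 1`, `W ↦ W ⊓ ker φ` maps the `W ∋ u` bijectively onto the `W ≤ ker φ`,
lowering the dimension by one, so double counting the pairs `(W, u)` shows that the terms with
`W ≰ ker φ` cancel those with `W ≤ ker φ`.
-/

variable (F : Type) [Field F] [Fintype F] (k m : ℕ)

/-- The matrix module `M = M_{k×m}(F)` as a left module over `R = M_{k×k}(F)`
via matrix multiplication. -/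
instance matSMul : SMul (Matrix (Fin k) (Fin k) F) (Matrix (Fin k) (Fin m) F) :=
  ⟨fun A X => A * X⟩

instance matModule : Module (Matrix (Fin k) (Fin k) F) (Matrix (Fin k) (Fin m) F) where
  one_smul X := Matrix.one_mul X
  mul_smul A B X := Matrix.mul_assoc A B X
  smul_zero A := Matrix.mul_zero A
  smul_add A X Y := Matrix.mul_add A X Y
  add_smul A B X := Matrix.add_mul A B X
  zero_smul X := Matrix.zero_mul X

instance matTower :
    IsScalarTower F (Matrix (Fin k) (Fin k) F) (Matrix (Fin k) (Fin m) F) :=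
  ⟨fun c A X => Matrix.smul_mul c A X⟩

noncomputable instance :
    Fintype (Submodule (Matrix (Fin k) (Fin k) F) (Matrix (Fin k) (Fin m) F)) :=
  Fintype.ofFinite _

/-- The dimension of an `R`-submodule `U ⊆ M`, i.e. `dim_{F_q}(U) / k`. -/
noncomputable def dimk
    (U : Submodule (Matrix (Fin k) (Fin k) F) (Matrix (Fin k) (Fin m) F)) : ℕ :=
  Module.finrank F (U.restrictScalars F) / k

open Classical in
/-- `η_V(U) = (−1)^(dim V − dim U) · q^(binom(dim V − dim U, 2))` if `U ⊆ V`, else `0`. -/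
noncomputable def etaV
    (V U : Submodule (Matrix (Fin k) (Fin k) F) (Matrix (Fin k) (Fin m) F)) : ℚ :=
  if U ≤ V then
    (-1 : ℚ) ^ (dimk F k m V - dimk F k m U) *
      (Fintype.card F : ℚ) ^ ((dimk F k m V - dimk F k m U).choose 2)
  else 0

open Module Finset

variable {R : Type*} [CommRing R]

-- The Möbius function `μ(W, V)` of the subspace lattice over `𝔽_q` when `dim V - dim W = d`.
def signedQPow (q : R) (d : ℕ) : R := (-1) ^ d * q ^ d.choose 2

lemma pow_mul_signedQPow (q : R) (d : ℕ) : q ^ d * signedQPow q d = -signedQPow q (d + 1) := by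
  simp only [signedQPow, Nat.choose_succ_succ', Nat.choose_one_right, pow_succ, pow_add]
  ring

namespace LinearMap

variable {K E : Type*} [Field K] [AddCommGroup E] [Module K E] (φ : E →ₗ[K] K)

lemma exists_mem_apply_eq_one {W : Submodule K E} (hW : ¬W ≤ ker φ) : ∃ u ∈ W, φ u = 1 := by
  obtain ⟨u, huW, hu⟩ := Set.not_subset.mp hW
  exact ⟨(φ u)⁻¹ • u, W.smul_mem _ huW, by simp [inv_mul_cancel₀ (show φ u ≠ 0 from hu)]⟩

section HyperplaneComplement

variable {φ} {u : E} (hu : φ u = 1)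
include hu

lemma ker_sup_span_singleton_eq_top : ker φ ⊔ K ∙ u = ⊤ := by
  refine eq_top_iff.mpr fun w _ => ?_
  have hw : w - φ w • u ∈ ker φ := by simp [hu]
  simpa using
    Submodule.add_mem_sup hw (Submodule.smul_mem _ (φ w) (Submodule.mem_span_singleton_self u))

lemma disjoint_ker_span_singleton : Disjoint (ker φ) (K ∙ u) := by
  have hu0 : u ≠ 0 := by rintro rfl; simp at hu
  exact (Submodule.disjoint_span_singleton' hu0).mpr (by simp [hu])

lemma sup_span_singleton_inf_ker {W : Submodule K E} (hW : W ≤ ker φ) :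
    (W ⊔ K ∙ u) ⊓ ker φ = W := by
  rw [sup_inf_assoc_of_le _ hW, inf_comm, (disjoint_ker_span_singleton hu).eq_bot, sup_bot_eq]

lemma inf_ker_sup_span_singleton {W : Submodule K E} (huW : u ∈ W) : W ⊓ ker φ ⊔ K ∙ u = W := by
  rw [inf_comm, sup_comm,
    ← sup_inf_assoc_of_le _ ((Submodule.span_singleton_le_iff_mem u W).mpr huW),
    sup_comm (K ∙ u), ker_sup_span_singleton_eq_top hu, top_inf_eq]

variable [FiniteDimensional K E]

lemma finrank_sup_span_singleton {W : Submodule K E} (hW : W ≤ ker φ) :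
    finrank K ↥(W ⊔ K ∙ u) = finrank K W + 1 := by
  have hu0 : u ≠ 0 := by rintro rfl; simp at hu
  have := Submodule.finrank_sup_add_finrank_inf_eq W (K ∙ u)
  rw [((disjoint_ker_span_singleton hu).mono_left hW).eq_bot, finrank_bot,
    finrank_span_singleton hu0] at this
  omega

lemma finrank_eq_finrank_inf_ker_add_one {W : Submodule K E} (huW : u ∈ W) :
    finrank K W = finrank K ↥(W ⊓ ker φ) + 1 := by
  conv_lhs => rw [← inf_ker_sup_span_singleton hu huW]
  exact finrank_sup_span_singleton hu inf_le_right

open Classical in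
lemma card_filter_mem_apply_eq_one [Fintype K] [Fintype E] {W : Submodule K E} (huW : u ∈ W) :
    #{v | v ∈ W ∧ φ v = 1} = Fintype.card K ^ (finrank K W - 1) := by
  rw [finrank_eq_finrank_inf_ker_add_one hu huW, Nat.add_sub_cancel, ← card_eq_pow_finrank,
    Fintype.card_subtype]
  refine card_nbij' (· - u) (· + u) ?_ ?_ (fun _ _ => by simp) (fun _ _ => by simp)
  · intro v hv
    simp only [coe_filter, mem_univ, true_and, Set.mem_ofPred_eq] at hv ⊢
    exact ⟨W.sub_mem hv.1 huW, by simp [hv.2, hu]⟩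
  · intro v hv
    simp only [coe_filter, mem_univ, true_and, Set.mem_ofPred_eq, Submodule.mem_inf,
      mem_ker] at hv ⊢
    exact ⟨W.add_mem hv.1 huW, by simp [hv.2, hu]⟩

end HyperplaneComplement

open Classical in
lemma card_filter_mem_apply_eq_one_mul_pow [Fintype K] [Fintype E] {V W : Submodule K E}
    (hWV : W ≤ V) (hW : ¬W ≤ ker φ) :
    #{v | v ∈ W ∧ φ v = 1} * Fintype.card K ^ (finrank K V - finrank K W) =
      Fintype.card K ^ (finrank K V - 1) := by
  obtain ⟨u, huW, hu⟩ := φ.exists_mem_apply_eq_one hW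
  have := finrank_eq_finrank_inf_ker_add_one hu huW
  have := Submodule.finrank_mono hWV
  rw [card_filter_mem_apply_eq_one hu huW, ← pow_add]
  congr 1
  omega

end LinearMap

section SubspaceInterval

open LinearMap

variable {K E : Type*} [Field K] [AddCommGroup E] [Module K E] [Fintype (Submodule K E)]

open Classical in
lemma sum_mem_eq_sum_le_ker [FiniteDimensional K E] {M : Type*} [AddCommMonoid M] (g : ℕ → M)
    {φ : E →ₗ[K] K} {X V : Submodule K E} {u : E} (hX : X ≤ ker φ) (huV : u ∈ V)
    (hu : φ u = 1) :
    ∑ W with (X ≤ W ∧ W ≤ V) ∧ u ∈ W, g (finrank K W) =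
      ∑ W with (X ≤ W ∧ W ≤ V) ∧ W ≤ ker φ, g (finrank K W + 1) := by
  symm
  refine sum_nbij' (· ⊔ K ∙ u) (· ⊓ ker φ) ?_ ?_ ?_ ?_ ?_
  · intro W hW
    simp only [mem_filter, mem_univ, true_and] at hW ⊢
    exact ⟨⟨le_sup_of_le_left hW.1.1,
        sup_le hW.1.2 ((Submodule.span_singleton_le_iff_mem _ _).mpr huV)⟩,
      Submodule.mem_sup_right (Submodule.mem_span_singleton_self u)⟩
  · intro W hW
    simp only [mem_filter, mem_univ, true_and] at hW ⊢
    exact ⟨⟨le_inf hW.1.1 hX, inf_le_left.trans hW.1.2⟩, inf_le_right⟩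
  · intro W hW
    simp only [mem_filter, mem_univ, true_and] at hW
    exact sup_span_singleton_inf_ker hu hW.2
  · intro W hW
    simp only [mem_filter, mem_univ, true_and] at hW
    exact inf_ker_sup_span_singleton hu hW.2
  · intro W hW
    simp only [mem_filter, mem_univ, true_and] at hW
    rw [finrank_sup_span_singleton hu hW.2]

open Classical in
lemma sum_mem_pow_mul_signedQPow [FiniteDimensional K E] (q : R) {φ : E →ₗ[K] K}
    {X V : Submodule K E} {u : E} (hX : X ≤ ker φ) (huV : u ∈ V) (hu : φ u = 1) :
    ∑ W with (X ≤ W ∧ W ≤ V) ∧ u ∈ W,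
        q ^ (finrank K V - finrank K W) * signedQPow q (finrank K V - finrank K W) =
      -∑ W with (X ≤ W ∧ W ≤ V) ∧ W ≤ ker φ, signedQPow q (finrank K V - finrank K W) := by
  rw [sum_mem_eq_sum_le_ker (fun j => q ^ (finrank K V - j) * signedQPow q (finrank K V - j))
    hX huV hu, ← sum_neg_distrib]
  refine sum_congr rfl fun W hW => ?_
  simp only [mem_filter, mem_univ, true_and] at hW
  have hWV : W < V := lt_of_le_of_ne hW.1.2 <| by
    rintro rfl
    simpa [hu] using mem_ker.mp (hW.2 huV)
  have := Submodule.finrank_lt_finrank_of_lt hWV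
  rw [pow_mul_signedQPow,
    show finrank K V - (finrank K W + 1) + 1 = finrank K V - finrank K W by omega]

open Classical in
lemma pow_mul_sum_signedQPow_not_le_ker [Fintype K] [Fintype E] {φ : E →ₗ[K] K}
    {X V : Submodule K E} (hX : X ≤ ker φ) (hV : ¬V ≤ ker φ) :
    (Fintype.card K : R) ^ (finrank K V - 1) * ∑ W with (X ≤ W ∧ W ≤ V) ∧ ¬W ≤ ker φ,
        signedQPow (Fintype.card K : R) (finrank K V - finrank K W) =
      -((Fintype.card K : R) ^ (finrank K V - 1) * ∑ W with (X ≤ W ∧ W ≤ V) ∧ W ≤ ker φ,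
        signedQPow (Fintype.card K : R) (finrank K V - finrank K W)) := by
  set q : R := (Fintype.card K : R)
  set n := finrank K V
  set c : Submodule K E → R := fun W => signedQPow q (n - finrank K W)
  set H : Submodule K E → Finset E := fun W => {u | u ∈ W ∧ φ u = 1}
  have hcardV : (#(H V) : R) = q ^ (n - 1) := by
    simpa [n, q] using congr((($(φ.card_filter_mem_apply_eq_one_mul_pow le_rfl hV) : ℕ) : R))
  calc
    _ = ∑ W with X ≤ W ∧ W ≤ V, #(H W) • (q ^ (n - finrank K W) * c W) := by
      rw [mul_sum, ← filter_filter, sum_filter]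
      refine sum_congr rfl fun W hW => ?_
      split_ifs with hWK
      · have : H W = ∅ := filter_eq_empty_iff.mpr fun u _ ⟨huW, hu⟩ => by
          simpa [hu] using mem_ker.mp (hWK huW)
        simp [this]
      · rw [nsmul_eq_mul, ← mul_assoc]
        congr 1
        simp only [q, n, H]
        rw [← Nat.cast_pow, ← φ.card_filter_mem_apply_eq_one_mul_pow (mem_filter.mp hW).2.2 hWK]
        push_cast
        rfl
    _ = ∑ u ∈ H V, ∑ W with (X ≤ W ∧ W ≤ V) ∧ u ∈ W, q ^ (n - finrank K W) * c W := by
      simp_rw [← sum_const]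
      refine sum_comm' fun W u => ?_
      simp only [H, mem_filter, mem_univ, true_and]
      exact ⟨fun ⟨hW, huW, hu⟩ => ⟨⟨hW, huW⟩, hW.2 huW, hu⟩,
        fun ⟨⟨hW, huW⟩, _, hu⟩ => ⟨hW, huW, hu⟩⟩
    _ = ∑ u ∈ H V, -∑ W with (X ≤ W ∧ W ≤ V) ∧ W ≤ ker φ, c W := by
      refine sum_congr rfl fun u hu => ?_
      simp only [H, mem_filter, mem_univ, true_and] at hu
      exact sum_mem_pow_mul_signedQPow q hX hu.1 hu.2
    _ = _ := by rw [sum_const, nsmul_eq_mul, hcardV, mul_neg]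

open Classical in
theorem sum_signedQPow_finrank_sub_eq_zero [Fintype K] [Fintype E] [IsDomain R] [CharZero R]
    {X V : Submodule K E} (hXV : X < V) :
    ∑ W with X ≤ W ∧ W ≤ V, signedQPow (Fintype.card K : R) (finrank K V - finrank K W) = 0 := by
  obtain ⟨v, hvV, hvX⟩ := SetLike.exists_of_lt hXV
  obtain ⟨φ, hφX, hφv⟩ := exists_extend_of_notMem (0 : X →ₗ[K] K) hvX 1
  have hXK : X ≤ ker φ := fun x hx => by simpa using congr($hφX ⟨x, hx⟩)
  have hVK : ¬V ≤ ker φ := fun h => by simpa [hφv] using mem_ker.mp (h hvV)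
  have hq : (Fintype.card K : R) ^ (finrank K V - 1) ≠ 0 :=
    pow_ne_zero _ (Nat.cast_ne_zero.mpr Fintype.card_ne_zero)
  rw [← sum_filter_add_sum_filter_not _ (· ≤ ker φ), filter_filter, filter_filter]
  apply mul_left_cancel₀ hq
  rw [mul_add, add_comm, pow_mul_sum_signedQPow_not_le_ker hXK hVK, neg_add_cancel, mul_zero]

end SubspaceInterval

section RowSpaces

variable {K : Type} [Field K] {m}

def rowsSubmodule (W : Submodule K (Fin m → K)) :
    Submodule (Matrix (Fin k) (Fin k) K) (Matrix (Fin k) (Fin m) K) where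
  carrier := {X | ∀ i, X i ∈ W}
  add_mem' hX hY i := W.add_mem (hX i) (hY i)
  zero_mem' _ := W.zero_mem
  smul_mem' A X hX i := by
    change (A * X) i ∈ W
    rw [Matrix.mul_apply_eq_vecMul, Matrix.vecMul_eq_sum]
    exact W.sum_mem fun j _ => W.smul_mem _ (hX j)

variable {k}

lemma mem_rowsSubmodule_iff_span_le {W : Submodule K (Fin m → K)} {X : Matrix (Fin k) (Fin m) K} :
    X ∈ rowsSubmodule k W ↔ Submodule.span K (Set.range X) ≤ W := by
  rw [Submodule.span_le]
  exact Set.range_subset_iff.symm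

lemma rowsSubmodule_le_rowsSubmodule_iff (hk : 0 < k) {W W' : Submodule K (Fin m → K)} :
    rowsSubmodule k W ≤ rowsSubmodule k W' ↔ W ≤ W' := by
  refine ⟨fun h v hv => ?_, fun h X hX i => h (hX i)⟩
  exact h (show Matrix.of (fun _ _ => v _) ∈ rowsSubmodule k W from fun _ => hv) ⟨0, hk⟩

lemma rowsSubmodule_surjective (hk : 0 < k) :
    Function.Surjective (rowsSubmodule (K := K) (m := m) k) := by
  intro U
  let z : Fin k := ⟨0, hk⟩
  refine ⟨(U.restrictScalars K).map (LinearMap.proj z : (Fin k → Fin m → K) →ₗ[K] _), ?_⟩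
  ext X
  change (∀ i, ∃ Y : Matrix (Fin k) (Fin m) K, Y ∈ U ∧ Y z = X i) ↔ X ∈ U
  constructor
  · intro hX
    choose Y hYU hYX using hX
    have hX_eq : ∑ i, Matrix.single i z (1 : K) * Y i = X := by
      ext i c
      rw [Matrix.sum_apply, Finset.sum_eq_single i
        (fun j _ hj => Matrix.single_mul_apply_of_ne _ _ _ _ _ hj.symm _) (by simp),
        Matrix.single_mul_apply_same, one_mul, hYX]
    rw [← hX_eq]
    exact U.sum_mem fun i _ => U.smul_mem (Matrix.single i z 1) (hYU i)
  · intro hX i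
    refine ⟨Matrix.single z i (1 : K) * X, U.smul_mem _ hX, ?_⟩
    ext
    rw [Matrix.single_mul_apply_same, one_mul]

lemma rowsSubmodule_bijective (hk : 0 < k) :
    Function.Bijective (rowsSubmodule (K := K) (m := m) k) :=
  ⟨fun _ _ h => le_antisymm ((rowsSubmodule_le_rowsSubmodule_iff hk).mp h.le)
    ((rowsSubmodule_le_rowsSubmodule_iff hk).mp h.ge), rowsSubmodule_surjective hk⟩

variable (k) in
def rowsSubmoduleEquiv (W : Submodule K (Fin m → K)) :
    (rowsSubmodule k W).restrictScalars K ≃ₗ[K] (Fin k → W) where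
  toFun X i := ⟨(X : Matrix (Fin k) (Fin m) K) i, X.2 i⟩
  map_add' _ _ := rfl
  map_smul' _ _ := rfl
  invFun f := ⟨Matrix.of fun i => (f i : Fin m → K), fun i => (f i).2⟩
  left_inv _ := rfl
  right_inv _ := rfl

lemma dimk_rowsSubmodule (hk : 0 < k) (W : Submodule K (Fin m → K)) :
    dimk K k m (rowsSubmodule k W) = finrank K W := by
  rw [dimk, (rowsSubmoduleEquiv k W).finrank_eq, finrank_pi_fintype]
  simp [Nat.mul_div_cancel_left _ hk]

end RowSpaces

theorem sum_etaV_indicator_eq_zero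
    (V : Submodule (Matrix (Fin k) (Fin k) F) (Matrix (Fin k) (Fin m) F))
    (hV : dimk F k m V > k) :
    ∀ x : Matrix (Fin k) (Fin m) F,
      ∑ U : Submodule (Matrix (Fin k) (Fin k) F) (Matrix (Fin k) (Fin m) F),
        etaV F k m V U *
          Set.indicator (U : Set (Matrix (Fin k) (Fin m) F)) (fun _ => (1 : ℚ)) x = 0 := by
  intro x
  classical
  have hk : 0 < k := Nat.pos_of_ne_zero fun h => by simp [h, dimk] at hV
  have := Fintype.ofFinite (Submodule F (Fin m → F))
  obtain ⟨WV, rfl⟩ := rowsSubmodule_surjective hk V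
  rw [dimk_rowsSubmodule hk] at hV
  rw [← (rowsSubmodule_bijective hk).sum_comp]
  by_cases hxV : x ∈ rowsSubmodule k WV
  · have hrows : finrank F (Submodule.span F (Set.range x)) ≤ k :=
      (finrank_range_le_card (R := F) x).trans_eq (Fintype.card_fin k)
    have hlt : Submodule.span F (Set.range x) < WV :=
      lt_of_le_of_ne (mem_rowsSubmodule_iff_span_le.mp hxV) fun h => by rw [h] at hrows; omega
    rw [← sum_signedQPow_finrank_sub_eq_zero (R := ℚ) hlt, sum_filter]
    refine sum_congr rfl fun W _ => ?_
    simp only [etaV, Set.indicator_apply, SetLike.mem_coe, mem_rowsSubmodule_iff_span_le,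
      rowsSubmodule_le_rowsSubmodule_iff hk, dimk_rowsSubmodule hk, signedQPow]
    split_ifs <;> simp_all
  · refine sum_eq_zero fun W _ => ?_
    simp only [etaV, Set.indicator_apply, SetLike.mem_coe]
    split_ifs with hWV hxW
    · exact absurd (hWV hxW) hxV
    all_goals simp
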